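/- There exists Q such that for every even integer q_0 ≥ Q: (i) for all k ≥ 1, |f(z)| ≤ a_{k+1}/8 and |f(z)| ≥ 4 a_k whenever |z| = a_k/4; (ii) for all k ≥ 0, |f(z)| ≥ 4 a_{k+1} and |f(z)| ≤ a_{k+2}/4 whenever |z| = 4 a_k. -/

import Mathlib

/-!
Write `L_k = log a_k`, so that `L_0 = q_0 / 2` and `L_{k+1} = q_k`. Then
`a_{k+1} / a_k = e^{q_k - L_k} ≥ e^{q_k / 2} ≥ q_k³`, so for `|z| ≤ 4 a_K` the numbers
`q_j |z| / a_j` with `j > K` decay geometrically, and these factors change `|f z|` by a factor in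
`[e⁻¹, e]`: `log |f z| = 2 log |z| + ∑_{j ≤ K} q_j log |1 - z / a_j| + O(1)`.
Zeros well inside the circle contribute terms in `[0, q_j log a_{K+1}]`, and
`∑_{j < k} q_j ≤ q_k / 100`. On `|z| = 4 a_k` the zero `a_k` contributes about `q_k log 3`; on
`|z| = a_k / 4` the zeros `a_{k-1}` and `a_k` contribute at least `q_{k-1}² / 2` and
`q_k log (3/4)`. As `q_k = 3 q_{k-1}² / 2` and `log (4/3) < 1/3`, these estimates beat
`log a_{k+1} = q_k` and `log a_{k+2} = q_{k+1}` with room to spare.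
-/

open Real Finset

lemma pow_three_le_exp_half {x : ℝ} (hx : 36 ≤ x) : x ^ 3 ≤ exp (x / 2) := by
  have h := pow_div_factorial_le_exp (x := x / 2) (by linarith) 6
  have hx3 : 46656 ≤ x ^ 3 := by nlinarith [pow_le_pow_left₀ (by norm_num) hx 3]
  norm_num [Nat.factorial] at h
  nlinarith [pow_le_pow_left₀ (by norm_num) hx 3]

lemma one_lt_log_three : 1 < log 3 := by
  rw [lt_log_iff_exp_lt (by norm_num)]
  linarith [exp_one_lt_d9]

lemma neg_lt_log_three_quarters : -0.31 < log (3 / 4) := by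
  have h43 : log (4 / 3) < 0.31 := by
    rw [log_lt_iff_lt_exp (by norm_num)]
    linarith [quadratic_le_exp_of_nonneg (x := 0.31) (by norm_num)]
  rw [show (3 / 4 : ℝ) = (4 / 3)⁻¹ by norm_num, log_inv]
  linarith

lemma log_le_log_norm_one_sub {w : ℂ} {x : ℝ} (hx : 0 < x) (h : x ≤ |1 - ‖w‖|) :
    log x ≤ log ‖1 - w‖ := by
  have := abs_norm_sub_norm_le (1 : ℂ) w
  rw [norm_one] at this
  exact log_le_log hx (h.trans this)

lemma log_norm_one_sub_le_log (w : ℂ) : log ‖1 - w‖ ≤ log (1 + ‖w‖) := by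
  rcases (norm_nonneg (1 - w)).eq_or_lt with h | h
  · rw [← h, log_zero]
    exact log_nonneg (by linarith [norm_nonneg w])
  · refine log_le_log h ?_
    simpa using norm_sub_le (1 : ℂ) w

lemma abs_log_norm_one_sub_le {w : ℂ} (hw : ‖w‖ ≤ 1 / 2) : |log ‖1 - w‖| ≤ 2 * ‖w‖ := by
  have hw0 := norm_nonneg w
  rw [abs_le]
  constructor
  · have hpos : 0 < 1 - ‖w‖ := by linarith
    calc -(2 * ‖w‖) ≤ 1 - (1 - ‖w‖)⁻¹ := by
          rw [le_sub_iff_add_le, ← le_sub_iff_add_le', inv_le_iff_one_le_mul₀ hpos]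
          nlinarith
      _ ≤ log (1 - ‖w‖) := one_sub_inv_le_log_of_pos hpos
      _ ≤ log ‖1 - w‖ := log_le_log_norm_one_sub hpos (le_abs_self _)
  · calc log ‖1 - w‖ ≤ log (1 + ‖w‖) := log_norm_one_sub_le_log w
      _ ≤ ‖w‖ := by linarith [log_le_sub_one_of_pos (by linarith : 0 < 1 + ‖w‖)]
      _ ≤ 2 * ‖w‖ := by linarith

lemma norm_tprod_eq_exp_tsum {ι E : Type*} [NormedCommRing E] [NormMulClass E] [NormOneClass E]
    {u : ι → E} (hu : Multipliable u) (h0 : ∀ i, u i ≠ 0) (hs : Summable fun i ↦ log ‖u i‖) :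
    ‖∏' i, u i‖ = exp (∑' i, log ‖u i‖) := by
  rw [hu.norm_tprod, rexp_tsum_eq_tprod (fun i ↦ norm_pos_iff.mpr (h0 i)) hs]

noncomputable def canonicalProduct (q : ℕ → ℕ) (a : ℕ → ℝ) (z : ℂ) : ℂ :=
  z ^ 2 * ∏' k, (1 - z / (a k : ℂ)) ^ q k

structure LacunaryZeros (q : ℕ → ℕ) (a : ℕ → ℝ) : Prop where
  thousand_le_q_zero : 1000 ≤ q 0
  two_mul_q_succ : ∀ k, 2 * q (k + 1) = 3 * q k ^ 2
  a_zero : a 0 = exp ((q 0 : ℝ) / 2)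
  a_succ : ∀ k, a (k + 1) = exp (q k)

namespace LacunaryZeros

variable {q : ℕ → ℕ} {a : ℕ → ℝ}

lemma cast_q_succ (h : LacunaryZeros q a) (k : ℕ) : (q (k + 1) : ℝ) = 3 / 2 * (q k : ℝ) ^ 2 := by
  have := h.two_mul_q_succ k
  have : (2 : ℝ) * q (k + 1) = 3 * (q k : ℝ) ^ 2 := by exact_mod_cast this
  linarith

lemma thousand_le_q (h : LacunaryZeros q a) (k : ℕ) : 1000 ≤ q k := by
  induction k with
  | zero => exact h.thousand_le_q_zero
  | succ k ih => have := h.two_mul_q_succ k; nlinarith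

lemma thousand_mul_q_le (h : LacunaryZeros q a) (k : ℕ) : 1000 * q k ≤ q (k + 1) := by
  have := h.two_mul_q_succ k; have := h.thousand_le_q k; nlinarith

lemma thousand_mul_two_pow_le_q (h : LacunaryZeros q a) (k : ℕ) : 1000 * 2 ^ k ≤ q k := by
  induction k with
  | zero => simpa using h.thousand_le_q 0
  | succ k ih => have := h.thousand_mul_q_le k; rw [pow_succ]; nlinarith

lemma sum_range_q_le (h : LacunaryZeros q a) (k : ℕ) : ∑ j ∈ range k, (q j : ℝ) ≤ q k / 100 := by
  induction k with
  | zero => simp only [range_zero, sum_empty]; positivity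
  | succ k ih =>
    have : (1000 : ℝ) * q k ≤ q (k + 1) := by exact_mod_cast h.thousand_mul_q_le k
    rw [sum_range_succ]
    linarith [(q k).cast_nonneg (α := ℝ)]

lemma a_pos (h : LacunaryZeros q a) (k : ℕ) : 0 < a k := by
  cases k with
  | zero => rw [h.a_zero]; exact exp_pos _
  | succ k => rw [h.a_succ]; exact exp_pos _

lemma log_a_succ (h : LacunaryZeros q a) (k : ℕ) : log (a (k + 1)) = q k := by
  rw [h.a_succ, log_exp]

lemma log_a_le (h : LacunaryZeros q a) (k : ℕ) : log (a k) ≤ q k / 2 := by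
  cases k with
  | zero => rw [h.a_zero, log_exp]
  | succ k =>
    have : (1000 : ℝ) * q k ≤ q (k + 1) := by exact_mod_cast h.thousand_mul_q_le k
    rw [h.log_a_succ]
    linarith [(q k).cast_nonneg (α := ℝ)]

lemma pow_three_mul_a_le (h : LacunaryZeros q a) (k : ℕ) : (q k : ℝ) ^ 3 * a k ≤ a (k + 1) := by
  have hq : (1000 : ℝ) ≤ q k := by exact_mod_cast h.thousand_le_q k
  calc (q k : ℝ) ^ 3 * a k ≤ exp ((q k : ℝ) / 2) * exp (log (a k)) := by
        rw [exp_log (h.a_pos k)]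
        gcongr
        · exact (h.a_pos k).le
        · exact pow_three_le_exp_half (by linarith)
    _ ≤ a (k + 1) := by
        rw [← exp_add, h.a_succ]
        gcongr
        linarith [h.log_a_le k]

lemma thousand_mul_a_le (h : LacunaryZeros q a) (k : ℕ) : 1000 * a k ≤ a (k + 1) := by
  have hq : (1000 : ℝ) ≤ q k := by exact_mod_cast h.thousand_le_q k
  have : (1000 : ℝ) ≤ (q k : ℝ) ^ 3 := by nlinarith [pow_le_pow_left₀ (by norm_num) hq 3]
  nlinarith [h.pow_three_mul_a_le k, h.a_pos k]

lemma one_le_a (h : LacunaryZeros q a) (k : ℕ) : 1 ≤ a k := by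
  cases k with
  | zero => rw [h.a_zero]; exact one_le_exp (by positivity)
  | succ k => rw [h.a_succ]; exact one_le_exp (by positivity)

lemma strictMono_a (h : LacunaryZeros q a) : StrictMono a :=
  strictMono_nat_of_lt_succ fun k ↦ by nlinarith [h.thousand_mul_a_le k, h.a_pos k]

lemma q_succ_mul_a_div_a_succ_le (h : LacunaryZeros q a) (k : ℕ) :
    (q (k + 1) : ℝ) * a k / a (k + 1) ≤ (1 / 2) ^ k / 500 := by
  have hq : (1000 : ℝ) * 2 ^ k ≤ q k := by exact_mod_cast h.thousand_mul_two_pow_le_q k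
  have hq0 : (0 : ℝ) < q k := lt_of_lt_of_le (by positivity) hq
  have ha := h.a_pos k
  calc (q (k + 1) : ℝ) * a k / a (k + 1) ≤ q (k + 1) * a k / ((q k : ℝ) ^ 3 * a k) := by
        gcongr
        exact h.pow_three_mul_a_le k
    _ = 3 / 2 / q k := by rw [h.cast_q_succ]; field_simp
    _ ≤ (1 / 2) ^ k / 500 := by
        rw [one_div_pow, div_div, div_div, div_le_div_iff₀ (by positivity) (by positivity)]
        linarith

lemma norm_div_a (h : LacunaryZeros q a) (z : ℂ) (j : ℕ) : ‖z / (a j : ℂ)‖ = ‖z‖ / a j := by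
  rw [norm_div, Complex.norm_real, norm_of_nonneg (h.a_pos j).le]

lemma abs_tail_term_le (h : LacunaryZeros q a) {K : ℕ} {z : ℂ} (hz : ‖z‖ ≤ 4 * a K) (i : ℕ) :
    |(q (i + (K + 1)) : ℝ) * log ‖1 - z / (a (i + (K + 1)) : ℂ)‖| ≤ (1 / 2) ^ i / 50 := by
  set n := i + K
  have han := h.a_pos n
  have hw : ‖z / (a (n + 1) : ℂ)‖ ≤ 4 * a n / a (n + 1) := by
    rw [h.norm_div_a]
    refine div_le_div_of_nonneg_right (hz.trans ?_) (h.a_pos _).le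
    gcongr
    exact h.strictMono_a.monotone (Nat.le_add_left K i)
  have hr : 4 * a n / a (n + 1) ≤ 1 / 2 := by
    rw [div_le_iff₀ (h.a_pos _)]
    linarith [h.thousand_mul_a_le n]
  calc |(q (n + 1) : ℝ) * log ‖1 - z / (a (n + 1) : ℂ)‖|
      = q (n + 1) * |log ‖1 - z / (a (n + 1) : ℂ)‖| := by rw [abs_mul, Nat.abs_cast]
    _ ≤ q (n + 1) * (2 * (4 * a n / a (n + 1))) := by
        gcongr
        exact (abs_log_norm_one_sub_le (hw.trans hr)).trans (by gcongr)
    _ = 8 * (q (n + 1) * a n / a (n + 1)) := by ring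
    _ ≤ 8 * ((1 / 2) ^ n / 500) :=
        mul_le_mul_of_nonneg_left (h.q_succ_mul_a_div_a_succ_le n) (by norm_num)
    _ ≤ (1 / 2) ^ i / 50 := by
        have : ((1 : ℝ) / 2) ^ n ≤ (1 / 2) ^ i :=
          pow_le_pow_of_le_one (by norm_num) (by norm_num) (Nat.le_add_right i K)
        linarith [pow_nonneg (by norm_num : (0 : ℝ) ≤ 1 / 2) n]

lemma norm_canonicalProduct_mem_Icc (h : LacunaryZeros q a) {z : ℂ}
    (hmult : Multipliable fun k ↦ (1 - z / (a k : ℂ)) ^ q k) (hz0 : z ≠ 0)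
    (hne : ∀ j, 1 - z / (a j : ℂ) ≠ 0) {K : ℕ} (hz : ‖z‖ ≤ 4 * a K) :
    ‖canonicalProduct q a z‖ ∈ Set.Icc
      (exp (2 * log ‖z‖ + ∑ j ∈ range (K + 1), (q j : ℝ) * log ‖1 - z / (a j : ℂ)‖ - 1))
      (exp (2 * log ‖z‖ + ∑ j ∈ range (K + 1), (q j : ℝ) * log ‖1 - z / (a j : ℂ)‖ + 1)) := by
  set g : ℕ → ℝ := fun j ↦ (q j : ℝ) * log ‖1 - z / (a j : ℂ)‖
  have htail_le : ∀ i, ‖g (i + (K + 1))‖ ≤ (1 / 2) ^ i / 50 := h.abs_tail_term_le hz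
  have hgeom : HasSum (fun i : ℕ ↦ ((1 : ℝ) / 2) ^ i / 50) (2 / 50) :=
    hasSum_geometric_two.div_const 50
  have hg : Summable g :=
    (summable_nat_add_iff (K + 1)).mp (hgeom.summable.of_norm_bounded htail_le)
  have htail : |∑' i, g (i + (K + 1))| ≤ 1 :=
    (tsum_of_norm_bounded hgeom htail_le).trans (by norm_num)
  have hprod : ‖∏' k, (1 - z / (a k : ℂ)) ^ q k‖ = exp (∑' j, g j) := by
    have hlog : ∀ j, log ‖(1 - z / (a j : ℂ)) ^ q j‖ = g j := fun j ↦ by rw [norm_pow, log_pow]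
    simp_rw [norm_tprod_eq_exp_tsum hmult (fun j ↦ pow_ne_zero _ (hne j)) (by simpa only [hlog]),
      hlog]
  have hnorm : ‖canonicalProduct q a z‖ =
      exp (2 * log ‖z‖ + ∑ j ∈ range (K + 1), g j + ∑' i, g (i + (K + 1))) := by
    rw [canonicalProduct, norm_mul, norm_pow, hprod, ← hg.sum_add_tsum_nat_add (K + 1),
      ← exp_log (norm_pos_iff.mpr hz0), ← exp_nat_mul, ← exp_add, exp_log (norm_pos_iff.mpr hz0)]
    push_cast
    ring_nf
  rw [hnorm, abs_le] at *
  exact ⟨exp_le_exp.mpr (by linarith), exp_le_exp.mpr (by linarith)⟩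

lemma one_sub_div_a_ne_zero (h : LacunaryZeros q a) {z : ℂ} {k : ℕ} (hlo : a k < ‖z‖)
    (hhi : ‖z‖ < a (k + 1)) (j : ℕ) : 1 - z / (a j : ℂ) ≠ 0 := by
  intro h0
  have hz : ‖z‖ = a j := by
    rw [sub_eq_zero, eq_comm, div_eq_one_iff_eq (by exact_mod_cast (h.a_pos j).ne')] at h0
    rw [h0, Complex.norm_real, norm_of_nonneg (h.a_pos j).le]
  rw [hz, h.strictMono_a.lt_iff_lt] at hlo hhi
  omega

lemma sum_range_le_of_norm_add_one_le (h : LacunaryZeros q a) {z : ℂ} {n : ℕ}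
    (hz : ‖z‖ + 1 ≤ a (n + 1)) (N : ℕ) :
    ∑ j ∈ range N, (q j : ℝ) * log ‖1 - z / (a j : ℂ)‖ ≤ (∑ j ∈ range N, (q j : ℝ)) * q n := by
  rw [sum_mul]
  refine sum_le_sum fun j _ ↦ mul_le_mul_of_nonneg_left ?_ (Nat.cast_nonneg _)
  calc log ‖1 - z / (a j : ℂ)‖ ≤ log (1 + ‖z‖ / a j) := by
        rw [← h.norm_div_a]; exact log_norm_one_sub_le_log _
    _ ≤ log (a (n + 1)) := by
        have := div_le_self (norm_nonneg z) (h.one_le_a j)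
        exact log_le_log (by have := h.a_pos j; positivity) (by linarith)
    _ = q n := h.log_a_succ n

lemma sum_range_nonneg_of_two_mul_le (h : LacunaryZeros q a) {z : ℂ} {n : ℕ}
    (hz : 2 * a n ≤ ‖z‖) : 0 ≤ ∑ j ∈ range n, (q j : ℝ) * log ‖1 - z / (a j : ℂ)‖ := by
  refine sum_nonneg fun j hj ↦ mul_nonneg (Nat.cast_nonneg _) ?_
  have haj : 2 * a j ≤ ‖z‖ :=
    le_trans (by gcongr; exact h.strictMono_a.monotone (mem_range.mp hj).le) hz
  have hw : 2 ≤ ‖z / (a j : ℂ)‖ := by rw [h.norm_div_a, le_div_iff₀ (h.a_pos j)]; linarith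
  simpa using log_le_log_norm_one_sub one_pos (le_abs.mpr (Or.inr (by linarith)))

lemma sum_log_bounds_of_norm_eq_four_mul (h : LacunaryZeros q a) {z : ℂ} {k : ℕ}
    (hz : ‖z‖ = 4 * a k) :
    (q k : ℝ) * log 3 ≤ ∑ j ∈ range (k + 1), (q j : ℝ) * log ‖1 - z / (a j : ℂ)‖ ∧
      ∑ j ∈ range (k + 1), (q j : ℝ) * log ‖1 - z / (a j : ℂ)‖ ≤
        (q k : ℝ) ^ 2 / 100 + q k * log 5 := by
  have hak := h.a_pos k
  have hw : ‖z / (a k : ℂ)‖ = 4 := by rw [h.norm_div_a, hz]; field_simp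
  have hinner_nonneg := h.sum_range_nonneg_of_two_mul_le (n := k) (by rw [hz]; linarith)
  have hinner_le := h.sum_range_le_of_norm_add_one_le (n := k)
    (by rw [hz]; linarith [h.thousand_mul_a_le k, h.one_le_a k]) k
  have hq : (0 : ℝ) ≤ q k := Nat.cast_nonneg _
  have hlo : log 3 ≤ log ‖1 - z / (a k : ℂ)‖ :=
    log_le_log_norm_one_sub (by norm_num) (by rw [hw]; norm_num)
  have hhi : log ‖1 - z / (a k : ℂ)‖ ≤ log 5 := by
    have := log_norm_one_sub_le_log (z / (a k : ℂ))
    rwa [hw, show (1 : ℝ) + 4 = 5 by norm_num] at this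
  rw [sum_range_succ]
  constructor
  · linarith [mul_le_mul_of_nonneg_left hlo hq]
  · nlinarith [mul_le_mul_of_nonneg_left hhi hq, mul_le_mul_of_nonneg_right (h.sum_range_q_le k) hq]

lemma sum_log_bounds_of_norm_eq_div_four (h : LacunaryZeros q a) {z : ℂ} {m : ℕ}
    (hz : ‖z‖ = a (m + 1) / 4) :
    (q m : ℝ) * (q m / 2 - log 8) + q (m + 1) * log (3 / 4) ≤
        ∑ j ∈ range (m + 2), (q j : ℝ) * log ‖1 - z / (a j : ℂ)‖ ∧
      ∑ j ∈ range (m + 2), (q j : ℝ) * log ‖1 - z / (a j : ℂ)‖ ≤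
        101 / 100 * (q m : ℝ) ^ 2 + q (m + 1) / 4 := by
  have ham := h.a_pos m
  have ham1 := h.a_pos (m + 1)
  have hgap := h.thousand_mul_a_le m
  have hq : (0 : ℝ) ≤ q m := Nat.cast_nonneg _
  have hq1 : (0 : ℝ) ≤ q (m + 1) := Nat.cast_nonneg _
  have hw : ‖z / (a (m + 1) : ℂ)‖ = 1 / 4 := by rw [h.norm_div_a, hz]; field_simp
  have hwm : ‖z / (a m : ℂ)‖ = a (m + 1) / (4 * a m) := by rw [h.norm_div_a, hz]; field_simp
  have hratio : 2 ≤ a (m + 1) / (4 * a m) := by rw [le_div_iff₀ (by positivity)]; linarith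
  have hinner_nonneg := h.sum_range_nonneg_of_two_mul_le (n := m) (by rw [hz]; linarith)
  have hinner_le := h.sum_range_le_of_norm_add_one_le (n := m)
    (by rw [hz]; linarith [h.one_le_a m]) (m + 1)
  have hm_lo : q m / 2 - log 8 ≤ log ‖1 - z / (a m : ℂ)‖ := by
    have hlog : log (a (m + 1) / (4 * a m) / 2) = q m - log 8 - log (a m) := by
      rw [div_div, show 4 * a m * 2 = 8 * a m by ring, ← h.log_a_succ,
        log_div ham1.ne' (by positivity), log_mul (by norm_num) ham.ne']
      ring
    have := log_le_log_norm_one_sub (w := z / (a m : ℂ)) (x := a (m + 1) / (4 * a m) / 2)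
      (by positivity) (by rw [hwm, abs_of_neg (by linarith)]; linarith)
    linarith [h.log_a_le m]
  have htop_lo : log (3 / 4) ≤ log ‖1 - z / (a (m + 1) : ℂ)‖ :=
    log_le_log_norm_one_sub (by norm_num) (by rw [hw]; norm_num)
  have htop_hi : log ‖1 - z / (a (m + 1) : ℂ)‖ ≤ 1 / 4 := by
    have := log_norm_one_sub_le_log (z / (a (m + 1) : ℂ))
    rw [hw] at this
    linarith [log_le_sub_one_of_pos (by norm_num : (0 : ℝ) < 1 + 1 / 4)]
  rw [sum_range_succ]
  constructor
  · rw [sum_range_succ]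
    linarith [mul_le_mul_of_nonneg_left hm_lo hq, mul_le_mul_of_nonneg_left htop_lo hq1]
  · have hqsum : ∑ j ∈ range (m + 1), (q j : ℝ) ≤ 101 / 100 * q m := by
      rw [sum_range_succ]; linarith [h.sum_range_q_le m]
    nlinarith [mul_le_mul_of_nonneg_left htop_hi hq1, mul_le_mul_of_nonneg_right hqsum hq]

lemma norm_canonicalProduct_bounds_of_norm_eq_four_mul (h : LacunaryZeros q a) {z : ℂ}
    (hmult : Multipliable fun j ↦ (1 - z / (a j : ℂ)) ^ q j) {k : ℕ} (hz : ‖z‖ = 4 * a k) :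
    4 * a (k + 1) ≤ ‖canonicalProduct q a z‖ ∧ ‖canonicalProduct q a z‖ ≤ a (k + 2) / 4 := by
  have hak := h.a_pos k
  have hz0 : z ≠ 0 := norm_pos_iff.mp (by rw [hz]; positivity)
  have hne := h.one_sub_div_a_ne_zero (k := k) (by rw [hz]; linarith)
    (by rw [hz]; linarith [h.thousand_mul_a_le k])
  obtain ⟨hlo, hhi⟩ := h.norm_canonicalProduct_mem_Icc hmult hz0 hne hz.le
  obtain ⟨hSlo, hShi⟩ := h.sum_log_bounds_of_norm_eq_four_mul hz
  have hlogz : log ‖z‖ = log 4 + log (a k) := by rw [hz, log_mul (by norm_num) hak.ne']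
  have hq : (1000 : ℝ) ≤ q k := by exact_mod_cast h.thousand_le_q k
  have hLk := h.log_a_le k
  have hLk0 := log_nonneg (h.one_le_a k)
  have hlog3 := one_lt_log_three
  have hlog4 : log 3 < log 4 := log_lt_log (by norm_num) (by norm_num)
  have hlog4' := log_le_sub_one_of_pos (by norm_num : (0 : ℝ) < 4)
  have hlog5 := log_le_sub_one_of_pos (by norm_num : (0 : ℝ) < 5)
  constructor
  · calc 4 * a (k + 1) = exp (log 4 + q k) := by rw [exp_add, exp_log (by norm_num), h.a_succ]
      _ ≤ _ := exp_le_exp.mpr (by rw [hlogz]; nlinarith)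
      _ ≤ _ := hlo
  · calc _ ≤ _ := hhi
      _ ≤ exp (q (k + 1) - log 4) := exp_le_exp.mpr (by rw [hlogz, h.cast_q_succ]; nlinarith)
      _ = a (k + 2) / 4 := by rw [exp_sub, exp_log (by norm_num), h.a_succ]

lemma norm_canonicalProduct_bounds_of_norm_eq_div_four (h : LacunaryZeros q a) {z : ℂ}
    (hmult : Multipliable fun j ↦ (1 - z / (a j : ℂ)) ^ q j) {m : ℕ}
    (hz : ‖z‖ = a (m + 1) / 4) :
    ‖canonicalProduct q a z‖ ≤ a (m + 2) / 8 ∧ 4 * a (m + 1) ≤ ‖canonicalProduct q a z‖ := by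
  have ham1 := h.a_pos (m + 1)
  have hz0 : z ≠ 0 := norm_pos_iff.mp (by rw [hz]; positivity)
  have hne := h.one_sub_div_a_ne_zero (k := m) (by rw [hz]; linarith [h.thousand_mul_a_le m])
    (by rw [hz]; linarith)
  obtain ⟨hlo, hhi⟩ := h.norm_canonicalProduct_mem_Icc hmult hz0 hne (K := m + 1)
    (by rw [hz]; linarith)
  rw [show m + 1 + 1 = m + 2 from rfl] at hlo hhi
  obtain ⟨hSlo, hShi⟩ := h.sum_log_bounds_of_norm_eq_div_four hz
  rw [h.cast_q_succ] at hSlo hShi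
  have hlogz : log ‖z‖ = q m - log 4 := by rw [hz, log_div ham1.ne' (by norm_num), h.log_a_succ]
  have hq : (1000 : ℝ) ≤ q m := by exact_mod_cast h.thousand_le_q m
  have hqq : 1000 * (q m : ℝ) ≤ q m * q m := mul_le_mul_of_nonneg_right hq (by positivity)
  have hlog34 := mul_le_mul_of_nonneg_left neg_lt_log_three_quarters.le
    (by positivity : (0 : ℝ) ≤ 3 / 2 * (q m : ℝ) ^ 2)
  have hlog4 := log_nonneg (by norm_num : (1 : ℝ) ≤ 4)
  have hlog4' := log_le_sub_one_of_pos (by norm_num : (0 : ℝ) < 4)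
  have hlog8 := mul_le_mul_of_nonneg_left (log_le_sub_one_of_pos (by norm_num : (0 : ℝ) < 8))
    (by positivity : (0 : ℝ) ≤ q m)
  constructor
  · calc _ ≤ _ := hhi
      _ ≤ exp (q (m + 1) - log 8) := exp_le_exp.mpr (by rw [hlogz, h.cast_q_succ]; nlinarith)
      _ = a (m + 2) / 8 := by rw [exp_sub, exp_log (by norm_num), h.a_succ]
  · calc 4 * a (m + 1) = exp (log 4 + q m) := by rw [exp_add, exp_log (by norm_num), h.a_succ]
      _ ≤ _ := exp_le_exp.mpr (by rw [hlogz]; nlinarith)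
      _ ≤ _ := hlo

end LacunaryZeros

/-- for `q_0` even and large enough: (i) for `k ≥ 1`,
`|f(z)| ≤ a_{k+1}/8` and `|f(z)| ≥ 4 a_k` on `|z| = a_k/4`; (ii) for `k ≥ 0`,
`|f(z)| ≥ 4 a_{k+1}` and `|f(z)| ≤ a_{k+2}/4` on `|z| = 4 a_k`. -/
theorem stmt_18 :
    ∃ Q : ℕ, ∀ q0 : ℕ, Even q0 → 0 < q0 → Q ≤ q0 →
      ∀ (q : ℕ → ℕ) (a : ℕ → ℝ) (f : ℂ → ℂ),
        q 0 = q0 →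
        (∀ k, 2 * q (k + 1) = 3 * q k ^ 2) →
        a 0 = Real.exp ((q0 : ℝ) / 2) →
        (∀ k, a (k + 1) = Real.exp (q k)) →
        (∀ z : ℂ, Multipliable (fun k : ℕ => (1 - z / (a k : ℂ)) ^ q k)) →
        (∀ z : ℂ, f z = z ^ 2 * ∏' k : ℕ, (1 - z / (a k : ℂ)) ^ q k) →
        (∀ k : ℕ, 1 ≤ k → ∀ z : ℂ, ‖z‖ = a k / 4 →
          ‖f z‖ ≤ a (k + 1) / 8 ∧ 4 * a k ≤ ‖f z‖) ∧
        (∀ k : ℕ, ∀ z : ℂ, ‖z‖ = 4 * a k →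
          4 * a (k + 1) ≤ ‖f z‖ ∧ ‖f z‖ ≤ a (k + 2) / 4) := by
  refine ⟨1000, fun q0 _ _ hQ q a f hq0 hq_succ ha0 ha_succ hmult hf ↦ ?_⟩
  have h : LacunaryZeros q a := ⟨hq0 ▸ hQ, hq_succ, hq0 ▸ ha0, ha_succ⟩
  have hf' : f = canonicalProduct q a := funext hf
  subst hf'
  refine ⟨fun k hk z hz ↦ ?_, fun k z hz ↦ h.norm_canonicalProduct_bounds_of_norm_eq_four_mul
    (hmult z) hz⟩
  obtain ⟨m, rfl⟩ := Nat.exists_eq_add_of_le' hk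
  exact h.norm_canonicalProduct_bounds_of_norm_eq_div_four (hmult z) hz
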